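/- arXiv:2602.07718 — 9 statements merged into one kernel-verified Lean document; each statement's English description precedes it below -/
import Mathlib

section
/- Let F : ℝ^d × ℝ^m → ℝ^m be continuously differentiable and suppose the Krawczyk condition holds for (F, x̂, ŷ, r₁, r₂, A, ρ) with r₂ > 0 and ρ ∈ (0,1). Then for every x ∈ I there exists a unique y* ∈ J such that F(x, y*) = 0, and moreover this y* satisfies ‖y* − ŷ‖_∞ ≤ ρ·r₂. -/
open Matrix Metric

/-- The (i,j) entry of the partial Jacobian of `F` with respect to the `y`-variables at `ξ`:
`∂f_i/∂y_j (ξ)`. -/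
noncomputable def pdY {d m : ℕ} (F : (Fin d → ℝ) × (Fin m → ℝ) → Fin m → ℝ)
    (ξ : (Fin d → ℝ) × (Fin m → ℝ)) (i j : Fin m) : ℝ :=
  fderiv ℝ F ξ (0, Pi.single j 1) i

/-- `M` is an `S`-mean-value Jacobian matrix of `F` (w.r.t. the `y`-variables):
each row of `M` is the `i`-th row of the partial Jacobian `D_y F` evaluated at some point of `S`. -/
def IsMVJacY {d m : ℕ} (F : (Fin d → ℝ) × (Fin m → ℝ) → Fin m → ℝ)
    (S : Set ((Fin d → ℝ) × (Fin m → ℝ))) (M : Matrix (Fin m) (Fin m) ℝ) : Prop :=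
  ∀ i : Fin m, ∃ ξ ∈ S, ∀ j : Fin m, M i j = pdY F ξ i j

/-- The Krawczyk condition for `(F, xh, yh, r₁, r₂, A, ρ)`. -/
def KrawczykCond {d m : ℕ} (F : (Fin d → ℝ) × (Fin m → ℝ) → Fin m → ℝ)
    (xh : Fin d → ℝ) (yh : Fin m → ℝ) (r₁ r₂ : ℝ)
    (A : Matrix (Fin m) (Fin m) ℝ) (ρ : ℝ) : Prop :=
  ∀ x ∈ closedBall xh r₁, ∀ y ∈ closedBall yh r₂,
    ∀ M : Matrix (Fin m) (Fin m) ℝ,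
      IsMVJacY F (closedBall xh r₁ ×ˢ closedBall yh r₂) M →
      ‖-(A.mulVec (F (x, yh))) + (1 - A * M).mulVec (y - yh)‖ ≤ ρ * r₂

lemma fderiv_apply_pdY {d m : ℕ} (F : (Fin d → ℝ) × (Fin m → ℝ) → Fin m → ℝ)
    (ξ : (Fin d → ℝ) × (Fin m → ℝ)) (v : Fin m → ℝ) (i : Fin m) :
    fderiv ℝ F ξ ((0 : Fin d → ℝ), v) i = ∑ j, pdY F ξ i j * v j := by
  have hv : ((0 : Fin d → ℝ), v) = ∑ j, v j • (((0 : Fin d → ℝ), Pi.single j 1) :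
      (Fin d → ℝ) × (Fin m → ℝ)) := by
    rw [Prod.ext_iff]
    constructor
    · simp [Prod.fst_sum]
    · simp only [Prod.snd_sum, Prod.smul_mk, smul_zero]
      ext j
      simp [Finset.sum_apply, Pi.single_apply, Finset.sum_ite_eq']
  rw [hv, map_sum]
  simp only [_root_.map_smul]
  rw [Finset.sum_apply]
  simp [pdY, mul_comm]

lemma mvt_row {d m : ℕ} (F : (Fin d → ℝ) × (Fin m → ℝ) → Fin m → ℝ)
    (hF : ContDiff ℝ 1 F) (x : Fin d → ℝ) (y₁ y₂ : Fin m → ℝ) (i : Fin m) :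
    ∃ c ∈ Set.Ioo (0:ℝ) 1, F (x, y₁) i - F (x, y₂) i
      = fderiv ℝ F (x, y₂ + c • (y₁ - y₂)) ((0 : Fin d → ℝ), y₁ - y₂) i := by
  set v := y₁ - y₂ with hv
  have hγ : ∀ t : ℝ, HasDerivAt (fun t : ℝ => ((x, y₂ + t • v) : (Fin d → ℝ) × (Fin m → ℝ)))
      ((0 : Fin d → ℝ), v) t := by
    intro t
    apply HasDerivAt.prodMk
    · exact hasDerivAt_const _ _
    · simpa using ((hasDerivAt_id t).smul_const v).const_add y₂
  have hφ : ∀ t : ℝ, HasDerivAt (fun t : ℝ => F (x, y₂ + t • v) i)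
      (fderiv ℝ F (x, y₂ + t • v) ((0 : Fin d → ℝ), v) i) t := by
    intro t
    have h1 : HasFDerivAt F (fderiv ℝ F (x, y₂ + t • v)) (x, y₂ + t • v) :=
      (hF.differentiable one_ne_zero _).hasFDerivAt
    have h2 := h1.comp_hasDerivAt t (hγ t)
    exact hasDerivAt_pi.mp h2 i
  obtain ⟨c, hc, hceq⟩ := exists_hasDerivAt_eq_slope (fun t => F (x, y₂ + t • v) i)
    (fun t => fderiv ℝ F (x, y₂ + t • v) ((0 : Fin d → ℝ), v) i) one_pos
    (Continuous.continuousOn (by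
      exact continuous_iff_continuousAt.mpr fun t => (hφ t).continuousAt))
    (fun t _ => hφ t)
  refine ⟨c, hc, ?_⟩
  rw [hceq]
  simp [hv]

lemma exists_mvjac {d m : ℕ} (F : (Fin d → ℝ) × (Fin m → ℝ) → Fin m → ℝ)
    (hF : ContDiff ℝ 1 F) (xh : Fin d → ℝ) (yh : Fin m → ℝ) (r₁ r₂ : ℝ)
    (x : Fin d → ℝ) (hx : x ∈ closedBall xh r₁)
    (y₁ y₂ : Fin m → ℝ) (h₁ : y₁ ∈ closedBall yh r₂) (h₂ : y₂ ∈ closedBall yh r₂) :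
    ∃ M : Matrix (Fin m) (Fin m) ℝ,
      (∀ i : Fin m, ∃ ξ ∈ (closedBall xh r₁ ×ˢ closedBall yh r₂),
        ∀ j : Fin m, M i j = pdY F ξ i j) ∧
      F (x, y₁) - F (x, y₂) = M.mulVec (y₁ - y₂) := by
  have H := fun i => mvt_row F hF x y₁ y₂ i
  choose c hc hcEq using H
  refine ⟨Matrix.of fun i j => pdY F (x, y₂ + c i • (y₁ - y₂)) i j, fun i => ?_, ?_⟩
  · refine ⟨(x, y₂ + c i • (y₁ - y₂)), ⟨hx, ?_⟩, fun j => rfl⟩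
    have hmem : (1 - c i) • y₂ + c i • y₁ ∈ closedBall yh r₂ :=
      (convex_closedBall yh r₂) h₂ h₁ (by linarith [(hc i).2]) (hc i).1.le (by ring)
    have : y₂ + c i • (y₁ - y₂) = (1 - c i) • y₂ + c i • y₁ := by module
    rwa [this]
  · funext i
    have h := hcEq i
    rw [fderiv_apply_pdY] at h
    simp only [Pi.sub_apply, Matrix.mulVec, dotProduct]
    exact h

theorem interval_krawczyk_test {d m : ℕ}
    (F : (Fin d → ℝ) × (Fin m → ℝ) → Fin m → ℝ) (hF : ContDiff ℝ 1 F)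
    (xh : Fin d → ℝ) (yh : Fin m → ℝ) (r₁ r₂ : ℝ) (hr₁ : 0 < r₁) (hr₂ : 0 < r₂)
    (A : Matrix (Fin m) (Fin m) ℝ) (ρ : ℝ) (hρ0 : 0 < ρ) (hρ1 : ρ < 1)
    (hK : KrawczykCond F xh yh r₁ r₂ A ρ) :
    ∀ x ∈ closedBall xh r₁,
      ∃ y : Fin m → ℝ,
        (y ∈ closedBall yh r₂ ∧ F (x, y) = 0 ∧ ‖y - yh‖ ≤ ρ * r₂) ∧
        ∀ y' ∈ closedBall yh r₂, F (x, y') = 0 → y' = y := by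
  intro x hx
  have hyh : yh ∈ closedBall yh r₂ := mem_closedBall_self hr₂.le
  -- operator norm bound
  have hB : ∀ M : Matrix (Fin m) (Fin m) ℝ, IsMVJacY F (closedBall xh r₁ ×ˢ closedBall yh r₂) M →
      ∀ v : Fin m → ℝ, ‖(1 - A * M).mulVec v‖ ≤ ρ * ‖v‖ := by
    intro M hM v
    have hsmall : ∀ w : Fin m → ℝ, ‖w‖ ≤ r₂ → ‖(1 - A * M).mulVec w‖ ≤ ρ * r₂ := by
      intro w hw
      have hmem1 : yh + w ∈ closedBall yh r₂ := by
        rw [mem_closedBall_iff_norm]; simpa using hw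
      have hmem2 : yh - w ∈ closedBall yh r₂ := by
        rw [mem_closedBall_iff_norm]; simpa [norm_neg] using hw
      have h1 := hK x hx (yh + w) hmem1 M hM
      have h2 := hK x hx (yh - w) hmem2 M hM
      have e1 : yh + w - yh = w := by abel
      have e2 : yh - w - yh = -w := by abel
      rw [e1] at h1
      rw [e2, Matrix.mulVec_neg] at h2
      have key : (2:ℝ) • (1 - A * M).mulVec w =
          (-(A.mulVec (F (x, yh))) + (1 - A * M).mulVec w) -
          (-(A.mulVec (F (x, yh))) + -((1 - A * M).mulVec w)) := by module
      have : ‖(2:ℝ) • (1 - A * M).mulVec w‖ ≤ ρ * r₂ + ρ * r₂ := by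
        rw [key]; exact (norm_sub_le _ _).trans (by gcongr)
      rw [norm_smul] at this
      simp only [Real.norm_ofNat] at this
      linarith
    rcases eq_or_ne v 0 with rfl | hv
    · simp [Matrix.mulVec_zero]
    · have hnv : 0 < ‖v‖ := norm_pos_iff.mpr hv
      set t : ℝ := r₂ / ‖v‖ with ht
      have htpos : 0 < t := div_pos hr₂ hnv
      have hwnorm : ‖t • v‖ = r₂ := by
        rw [norm_smul, Real.norm_eq_abs, abs_of_pos htpos, ht, div_mul_cancel₀ _ hnv.ne']
      have := hsmall (t • v) hwnorm.le
      rw [Matrix.mulVec_smul, norm_smul, Real.norm_eq_abs, abs_of_pos htpos] at this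
      have h2 : t * ‖(1 - A * M).mulVec v‖ ≤ ρ * (t * ‖v‖) := by
        rw [ht, div_mul_cancel₀ _ hnv.ne']; linarith
      calc ‖(1 - A * M).mulVec v‖ = (t * ‖(1 - A * M).mulVec v‖) / t := by
            field_simp
        _ ≤ (ρ * (t * ‖v‖)) / t := by gcongr
        _ = ρ * ‖v‖ := by field_simp
  -- A injective
  have hAinj : Function.Injective A.mulVec := by
    set M₀ : Matrix (Fin m) (Fin m) ℝ := Matrix.of fun i j => pdY F (xh, yh) i j with hM₀
    have hM₀jac : IsMVJacY F (closedBall xh r₁ ×ˢ closedBall yh r₂) M₀ :=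
      fun i => ⟨(xh, yh), ⟨mem_closedBall_self hr₁.le, hyh⟩, fun j => rfl⟩
    have hinj : Function.Injective (A * M₀).mulVecLin := by
      rw [injective_iff_map_eq_zero]
      intro z hz
      have hz' : (A * M₀).mulVec z = 0 := hz
      have : (1 - A * M₀).mulVec z = z := by
        rw [Matrix.sub_mulVec, Matrix.one_mulVec, hz', sub_zero]
      have hb := hB M₀ hM₀jac z
      rw [this] at hb
      by_contra hzz
      have : 0 < ‖z‖ := norm_pos_iff.mpr hzz
      nlinarith
    have hsurj : Function.Surjective (A * M₀).mulVecLin :=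
      LinearMap.injective_iff_surjective.mp hinj
    rw [Matrix.mulVecLin_mul] at hsurj
    have hAsurj : Function.Surjective A.mulVecLin := by
      exact Function.Surjective.of_comp hsurj
    exact LinearMap.injective_iff_surjective.mpr hAsurj
  -- the map g
  set g : (Fin m → ℝ) → (Fin m → ℝ) := fun y => y - A.mulVec (F (x, y)) with hg
  have hC : ∀ y ∈ closedBall yh r₂, ‖g y - yh‖ ≤ ρ * r₂ := by
    intro y hy
    obtain ⟨M, hM, hEq⟩ := exists_mvjac F hF xh yh r₁ r₂ x hx y yh hy hyh
    have hgy : g y - yh = -(A.mulVec (F (x, yh))) + (1 - A * M).mulVec (y - yh) := by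
      rw [Matrix.sub_mulVec, Matrix.one_mulVec, ← Matrix.mulVec_mulVec, ← hEq,
        Matrix.mulVec_sub]
      simp only [hg]
      abel
    rw [hgy]
    exact hK x hx y hy M hM
  have hD : ∀ y₁ ∈ closedBall yh r₂, ∀ y₂ ∈ closedBall yh r₂,
      ‖g y₁ - g y₂‖ ≤ ρ * ‖y₁ - y₂‖ := by
    intro y₁ h₁ y₂ h₂
    obtain ⟨M, hM, hEq⟩ := exists_mvjac F hF xh yh r₁ r₂ x hx y₁ y₂ h₁ h₂
    have hkey : g y₁ - g y₂ = (1 - A * M).mulVec (y₁ - y₂) := by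
      rw [Matrix.sub_mulVec, Matrix.one_mulVec, ← Matrix.mulVec_mulVec, ← hEq,
        Matrix.mulVec_sub]
      simp only [hg]
      abel
    rw [hkey]
    exact hB M hM _
  -- fixed point setup
  have hρr : ρ * r₂ ≤ r₂ := by nlinarith
  have hgmap : ∀ y ∈ closedBall yh r₂, g y ∈ closedBall yh r₂ := by
    intro y hy
    rw [mem_closedBall_iff_norm]
    exact (hC y hy).trans hρr
  haveI : Nonempty (closedBall yh r₂) := ⟨⟨yh, hyh⟩⟩
  haveI : CompleteSpace (closedBall yh r₂) := (isClosed_closedBall (x := yh) (ε := r₂)).completeSpace_coe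
  set G : closedBall yh r₂ → closedBall yh r₂ := fun p => ⟨g p.1, hgmap p.1 p.2⟩ with hG
  have hGc : ContractingWith ⟨ρ, hρ0.le⟩ G := by
    constructor
    · exact_mod_cast hρ1
    · apply LipschitzWith.of_dist_le_mul
      intro a b
      rw [Subtype.dist_eq, Subtype.dist_eq, dist_eq_norm, dist_eq_norm]
      exact hD a.1 a.2 b.1 b.2
  set ystar := (hGc.fixedPoint G) with hys
  have hfix : G ystar = ystar := hGc.fixedPoint_isFixedPt
  have hfix' : g ystar.1 = ystar.1 := congrArg Subtype.val hfix
  simp only [hG, hg] at hfix'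
  have hfix2 : (ystar : Fin m → ℝ) - A.mulVec (F (x, ystar.1)) = ystar.1 := hfix'
  have hAF : A.mulVec (F (x, ystar.1)) = 0 := sub_eq_self.mp hfix2
  have hF0 : F (x, ystar.1) = 0 := hAinj (by rw [hAF, Matrix.mulVec_zero])
  have hnorm : ‖ystar.1 - yh‖ ≤ ρ * r₂ := by
    have h := hC ystar.1 ystar.2
    have hgy : g ystar.1 = ystar.1 := hfix2
    rwa [hgy] at h
  refine ⟨ystar.1, ⟨ystar.2, hF0, hnorm⟩, ?_⟩
  intro y' hy' hFy'
  have hgy' : g y' = y' := by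
    simp only [hg]; rw [hFy', Matrix.mulVec_zero, sub_zero]
  have hd := hD y' hy' ystar.1 ystar.2
  rw [hgy'] at hd
  have hgy2 : g ystar.1 = ystar.1 := hfix2
  rw [hgy2] at hd
  have hz : ‖y' - ystar.1‖ = 0 := by nlinarith [norm_nonneg (y' - ystar.1)]
  have := norm_eq_zero.mp hz
  exact sub_eq_zero.mp this
end

section
/- Let G : ℝ^m → ℝ^m be continuously differentiable and suppose the square Krawczyk condition holds for (G, ŷ, r₂, A, ρ) with r₂ > 0 and ρ ∈ (0,1). Then there exists a unique y* ∈ J such that G(y*) = 0, and this y* satisfies ‖y* − ŷ‖_∞ ≤ ρ·r₂. -/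
open Matrix Metric

/-- The (i,j) entry of the Jacobian matrix of `G` at `ξ`: `∂g_i/∂y_j (ξ)`. -/
noncomputable def pd {m : ℕ} (G : (Fin m → ℝ) → Fin m → ℝ)
    (ξ : Fin m → ℝ) (i j : Fin m) : ℝ :=
  fderiv ℝ G ξ (Pi.single j 1) i

/-- `M` is an `S`-mean-value Jacobian matrix of `G`: each row of `M` is the `i`-th row of the
Jacobian of `G` evaluated at some point of `S`. -/
def IsMVJac {m : ℕ} (G : (Fin m → ℝ) → Fin m → ℝ)
    (S : Set (Fin m → ℝ)) (M : Matrix (Fin m) (Fin m) ℝ) : Prop :=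
  ∀ i : Fin m, ∃ ξ ∈ S, ∀ j : Fin m, M i j = pd G ξ i j

/-- The square Krawczyk condition for `(G, yh, r₂, A, ρ)`. -/
def SquareKrawczykCond {m : ℕ} (G : (Fin m → ℝ) → Fin m → ℝ)
    (yh : Fin m → ℝ) (r₂ : ℝ) (A : Matrix (Fin m) (Fin m) ℝ) (ρ : ℝ) : Prop :=
  ∀ y ∈ closedBall yh r₂,
    ∀ M : Matrix (Fin m) (Fin m) ℝ,
      IsMVJac G (closedBall yh r₂) M →
      ‖-(A.mulVec (G yh)) + (1 - A * M).mulVec (y - yh)‖ ≤ ρ * r₂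

section Aux

variable {m : ℕ}

/-- Component of the Fréchet derivative as a sum over the partials. -/
lemma fderiv_apply_eq_sum (G : (Fin m → ℝ) → Fin m → ℝ) (ξ w : Fin m → ℝ) (i : Fin m) :
    fderiv ℝ G ξ w i = ∑ j, pd G ξ i j * w j := by
  have hw : w = ∑ j, w j • (Pi.single j 1 : Fin m → ℝ) := by
    have := Finset.univ_sum_single w
    rw [← this]
    congr 1
    ext j k
    simp [Pi.single_apply]
  conv_lhs => rw [hw]
  rw [map_sum]
  simp only [_root_.map_smul, Finset.sum_apply, Pi.smul_apply, smul_eq_mul, pd]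
  exact Finset.sum_congr rfl fun j _ => mul_comm _ _

/-- Row-wise mean value theorem: a mean value Jacobian over the segment. -/
lemma exists_mvjac_s1 (G : (Fin m → ℝ) → Fin m → ℝ) (hG : ContDiff ℝ 1 G)
    (yh : Fin m → ℝ) (r₂ : ℝ) (u v : Fin m → ℝ)
    (hu : u ∈ closedBall yh r₂) (hv : v ∈ closedBall yh r₂) :
    ∃ M : Matrix (Fin m) (Fin m) ℝ, IsMVJac G (closedBall yh r₂) M ∧
      G v - G u = M.mulVec (v - u) := by
  have hGd : Differentiable ℝ G := hG.differentiable one_ne_zero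
  set γ : ℝ → (Fin m → ℝ) := fun t => u + t • (v - u) with hγdef
  have hγmem : ∀ t ∈ Set.Icc (0:ℝ) 1, γ t ∈ closedBall yh r₂ := by
    intro t ht
    have : γ t = (1 - t) • u + t • v := by
      simp only [hγdef]; module
    rw [this]
    exact (convex_closedBall yh r₂) hu hv (by linarith [ht.2]) ht.1 (by ring)
  have hγderiv : ∀ t : ℝ, HasDerivAt γ (v - u) t := by
    intro t
    have h1 : HasDerivAt (fun t : ℝ => t • (v - u)) ((1:ℝ) • (v - u)) t :=
      (hasDerivAt_id t).smul_const (v - u)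
    have h2 := h1.const_add u
    rw [one_smul] at h2
    exact h2
  have key : ∀ i : Fin m, ∃ ξ ∈ closedBall yh r₂,
      G v i - G u i = ∑ j, pd G ξ i j * (v - u) j := by
    intro i
    set φ : ℝ → ℝ := fun t => G (γ t) i with hφdef
    have hφderiv : ∀ t : ℝ, HasDerivAt φ (fderiv ℝ G (γ t) (v - u) i) t := by
      intro t
      have hF : HasFDerivAt G (fderiv ℝ G (γ t)) (γ t) := (hGd (γ t)).hasFDerivAt
      have hcomp : HasDerivAt (fun t => G (γ t)) (fderiv ℝ G (γ t) (v - u)) t :=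
        hF.comp_hasDerivAt t (hγderiv t)
      have := (ContinuousLinearMap.proj (R := ℝ) (φ := fun _ : Fin m => ℝ) i).hasFDerivAt.comp_hasDerivAt t hcomp
      exact this
    obtain ⟨c, hc, hceq⟩ := exists_hasDerivAt_eq_slope φ
      (fun t => fderiv ℝ G (γ t) (v - u) i) zero_lt_one
      (fun t _ => (hφderiv t).continuousAt.continuousWithinAt)
      (fun t _ => hφderiv t)
    refine ⟨γ c, hγmem c ⟨hc.1.le, hc.2.le⟩, ?_⟩
    have hφ1 : φ 1 = G v i := by simp [hφdef, hγdef]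
    have hφ0 : φ 0 = G u i := by simp [hφdef, hγdef]
    rw [← fderiv_apply_eq_sum]
    rw [hceq, hφ1, hφ0]
    ring
  choose ξ hξmem hξeq using key
  refine ⟨Matrix.of fun i j => pd G (ξ i) i j, fun i => ⟨ξ i, hξmem i, fun j => rfl⟩, ?_⟩
  funext i
  simp only [Pi.sub_apply, Matrix.mulVec, dotProduct, Matrix.of_apply]
  exact hξeq i

/-- From the Krawczyk condition: `1 - A * M` is a `ρ`-contraction in operator norm. -/
lemma mvjac_bound {G : (Fin m → ℝ) → Fin m → ℝ} {yh : Fin m → ℝ} {r₂ : ℝ}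
    {A : Matrix (Fin m) (Fin m) ℝ} {ρ : ℝ} (hr₂ : 0 < r₂) (hρ0 : 0 < ρ)
    (hK : SquareKrawczykCond G yh r₂ A ρ)
    {M : Matrix (Fin m) (Fin m) ℝ} (hM : IsMVJac G (closedBall yh r₂) M)
    (v : Fin m → ℝ) : ‖(1 - A * M).mulVec v‖ ≤ ρ * ‖v‖ := by
  set N : Matrix (Fin m) (Fin m) ℝ := 1 - A * M with hN
  have step1 : ∀ w : Fin m → ℝ, ‖w‖ ≤ r₂ → ‖N.mulVec w‖ ≤ ρ * r₂ := by
    intro w hw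
    have h1 : ‖-(A.mulVec (G yh)) + N.mulVec w‖ ≤ ρ * r₂ := by
      have := hK (yh + w) (by simpa [mem_closedBall, dist_eq_norm] using hw) M hM
      simpa using this
    have h2 : ‖-(A.mulVec (G yh)) + N.mulVec (-w)‖ ≤ ρ * r₂ := by
      have := hK (yh - w) (by simpa [mem_closedBall, dist_eq_norm] using hw) M hM
      have heq : yh - w - yh = -w := by abel
      rwa [heq] at this
    have h3 : ‖(-(A.mulVec (G yh)) + N.mulVec w) - (-(A.mulVec (G yh)) + N.mulVec (-w))‖
        ≤ ρ * r₂ + ρ * r₂ := (norm_sub_le _ _).trans (add_le_add h1 h2)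
    have h4 : (-(A.mulVec (G yh)) + N.mulVec w) - (-(A.mulVec (G yh)) + N.mulVec (-w))
        = (2:ℝ) • N.mulVec w := by
      rw [Matrix.mulVec_neg]
      module
    rw [h4, norm_smul, Real.norm_ofNat] at h3
    linarith
  rcases eq_or_ne v 0 with rfl | hv
  · simp
  · have hnv : 0 < ‖v‖ := norm_pos_iff.mpr hv
    set c : ℝ := r₂ / ‖v‖ with hc
    have hcpos : 0 < c := div_pos hr₂ hnv
    have hcw : ‖c • v‖ = r₂ := by
      rw [norm_smul, Real.norm_eq_abs, abs_of_pos hcpos, hc]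
      field_simp
    have := step1 (c • v) hcw.le
    rw [Matrix.mulVec_smul, norm_smul, Real.norm_eq_abs, abs_of_pos hcpos] at this
    have : c * ‖N.mulVec v‖ ≤ ρ * (c * ‖v‖) := by
      rw [hc]; rw [hc] at this
      calc r₂ / ‖v‖ * ‖N.mulVec v‖ ≤ ρ * r₂ := this
        _ = ρ * (r₂ / ‖v‖ * ‖v‖) := by field_simp
    exact le_of_mul_le_mul_left (by linarith [this]) hcpos

end Aux

theorem square_krawczyk_test {m : ℕ}
    (G : (Fin m → ℝ) → Fin m → ℝ) (hG : ContDiff ℝ 1 G)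
    (yh : Fin m → ℝ) (r₂ : ℝ) (hr₂ : 0 < r₂)
    (A : Matrix (Fin m) (Fin m) ℝ) (ρ : ℝ) (hρ0 : 0 < ρ) (hρ1 : ρ < 1)
    (hK : SquareKrawczykCond G yh r₂ A ρ) :
    ∃ y : Fin m → ℝ,
      (y ∈ closedBall yh r₂ ∧ G y = 0 ∧ ‖y - yh‖ ≤ ρ * r₂) ∧
      ∀ y' ∈ closedBall yh r₂, G y' = 0 → y' = y := by
  have hρr : ρ * r₂ ≤ r₂ := by nlinarith
  -- A is injective (as mulVec)
  have hAinj : Function.Injective (A.mulVec) := by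
    have hM0 : IsMVJac G (closedBall yh r₂) (Matrix.of fun i j => pd G yh i j) :=
      fun i => ⟨yh, mem_closedBall_self hr₂.le, fun j => rfl⟩
    set M₀ : Matrix (Fin m) (Fin m) ℝ := Matrix.of fun i j => pd G yh i j
    have hinj : Function.Injective (Matrix.toLin' (A * M₀)) := by
      intro x y hxy
      have h0 : (A * M₀).mulVec (x - y) = 0 := by
        rw [Matrix.mulVec_sub]
        rw [Matrix.toLin'_apply, Matrix.toLin'_apply] at hxy
        rw [hxy, sub_self]
      have hxyeq : (1 - A * M₀).mulVec (x - y) = x - y := by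
        rw [Matrix.sub_mulVec, Matrix.one_mulVec, h0, sub_zero]
      have hb := mvjac_bound hr₂ hρ0 hK hM0 (x - y)
      rw [hxyeq] at hb
      have : ‖x - y‖ = 0 := by nlinarith [norm_nonneg (x - y)]
      exact sub_eq_zero.mp (norm_eq_zero.mp this)
    have hsurj : Function.Surjective (Matrix.toLin' (A * M₀)) :=
      LinearMap.injective_iff_surjective.mp hinj
    have hAsurj : Function.Surjective (Matrix.toLin' A) := by
      rw [Matrix.toLin'_mul] at hsurj
      exact Function.Surjective.of_comp hsurj
    have := LinearMap.injective_iff_surjective.mpr hAsurj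
    intro x y hxy
    apply this
    rwa [Matrix.toLin'_apply, Matrix.toLin'_apply]
  -- the Krawczyk map
  set K : (Fin m → ℝ) → (Fin m → ℝ) := fun y => y - A.mulVec (G y) with hKdef
  have hKball : ∀ y ∈ closedBall yh r₂, ‖K y - yh‖ ≤ ρ * r₂ := by
    intro y hy
    obtain ⟨M, hM, hMeq⟩ := exists_mvjac_s1 G hG yh r₂ yh y (mem_closedBall_self hr₂.le) hy
    have hrw : K y - yh = -(A.mulVec (G yh)) + (1 - A * M).mulVec (y - yh) := by
      rw [Matrix.sub_mulVec, Matrix.one_mulVec, ← Matrix.mulVec_mulVec,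
        ← hMeq, Matrix.mulVec_sub, hKdef]
      simp only
      abel
    rw [hrw]
    exact hK y hy M hM
  have hKlip : ∀ x ∈ closedBall yh r₂, ∀ y ∈ closedBall yh r₂,
      ‖K x - K y‖ ≤ ρ * ‖x - y‖ := by
    intro x hx y hy
    obtain ⟨M, hM, hMeq⟩ := exists_mvjac_s1 G hG yh r₂ y x hy hx
    have hrw : K x - K y = (1 - A * M).mulVec (x - y) := by
      rw [Matrix.sub_mulVec, Matrix.one_mulVec, ← Matrix.mulVec_mulVec, ← hMeq,
        Matrix.mulVec_sub, hKdef]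
      simp only
      abel
    rw [hrw]
    exact mvjac_bound hr₂ hρ0 hK hM (x - y)
  -- fixed point via Banach
  set s : Set (Fin m → ℝ) := closedBall yh r₂ with hs
  haveI : CompleteSpace ↥s := (isClosed_closedBall (x := yh) (ε := r₂)).completeSpace_coe
  haveI : Nonempty ↥s := ⟨⟨yh, mem_closedBall_self hr₂.le⟩⟩
  set K' : ↥s → ↥s := fun x => ⟨K x.1, by
    show K x.1 ∈ closedBall yh r₂
    rw [mem_closedBall, dist_eq_norm]
    exact (hKball x.1 x.2).trans hρr⟩ with hK'def
  have hlip : LipschitzWith ρ.toNNReal K' := by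
    apply LipschitzWith.of_dist_le_mul
    intro x y
    rw [Subtype.dist_eq, Subtype.dist_eq, dist_eq_norm, dist_eq_norm,
      Real.coe_toNNReal _ hρ0.le]
    exact hKlip x.1 x.2 y.1 y.2
  have hC : ContractingWith ρ.toNNReal K' := ⟨Real.toNNReal_lt_one.mpr hρ1, hlip⟩
  set yst : ↥s := ContractingWith.fixedPoint K' hC with hyst
  have hfix : K' yst = yst := hC.fixedPoint_isFixedPt
  have hfix' : K yst.1 = yst.1 := congrArg Subtype.val hfix
  set y : Fin m → ℝ := yst.1 with hy
  have hymem : y ∈ closedBall yh r₂ := yst.2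
  have hAG0 : A.mulVec (G y) = 0 := by
    have : y - A.mulVec (G y) = y := hfix'
    have := sub_eq_self.mp this
    exact this
  have hGy0 : G y = 0 := hAinj (by rw [hAG0, Matrix.mulVec_zero])
  have hbound : ‖y - yh‖ ≤ ρ * r₂ := by
    have := hKball y hymem
    rwa [hfix'] at this
  refine ⟨y, ⟨hymem, hGy0, hbound⟩, ?_⟩
  intro y' hy' hGy'
  obtain ⟨M, hM, hMeq⟩ := exists_mvjac_s1 G hG yh r₂ y y' hymem hy'
  rw [hGy', hGy0, sub_zero] at hMeq
  have heq : (1 - A * M).mulVec (y' - y) = y' - y := by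
    rw [Matrix.sub_mulVec, Matrix.one_mulVec, ← Matrix.mulVec_mulVec, ← hMeq]
    simp
  have hb := mvjac_bound hr₂ hρ0 hK hM (y' - y)
  rw [heq] at hb
  have : ‖y' - y‖ = 0 := by nlinarith [norm_nonneg (y' - y)]
  exact sub_eq_zero.mp (norm_eq_zero.mp this)
end

section
/- Let G : ℝ^m → ℝ^m be continuously differentiable and suppose the square Krawczyk condition holds for (G, ŷ, r₂, A, ρ) with r₂ > 0 and ρ ∈ (0,1). Then the Newton-like operator P(y) := y − A·G(y) maps J into the ball {y : ‖y − ŷ‖_∞ ≤ ρ·r₂}; that is, for every y ∈ J one has ‖(y − A·G(y)) − ŷ‖_∞ ≤ ρ·r₂. -/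
open Matrix Metric

/-- The Newton-like operator `P y = y - A ⬝ G y` maps `J` into the ball of radius `ρ r₂`. -/
theorem newton_operator_contracts_into_ball {m : ℕ}
    (G : (Fin m → ℝ) → Fin m → ℝ) (hG : ContDiff ℝ 1 G)
    (yh : Fin m → ℝ) (r₂ : ℝ) (hr₂ : 0 < r₂)
    (A : Matrix (Fin m) (Fin m) ℝ) (ρ : ℝ) (hρ0 : 0 < ρ) (hρ1 : ρ < 1)
    (hK : SquareKrawczykCond G yh r₂ A ρ) :
    ∀ y ∈ closedBall yh r₂, ‖(y - A.mulVec (G y)) - yh‖ ≤ ρ * r₂ := by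
  intro y hy
  have hdiff : Differentiable ℝ G := hG.differentiable one_ne_zero
  set v : Fin m → ℝ := y - yh with hv
  have hvnorm : ‖v‖ ≤ r₂ := by
    rw [hv]
    simpa [dist_eq_norm] using (mem_closedBall.mp hy)
  -- linearity of fderiv applied at coordinates
  have hlin : ∀ (ξ : Fin m → ℝ) (i : Fin m),
      (fderiv ℝ G ξ) v i = ∑ j, pd G ξ i j * v j := by
    intro ξ i
    have hv_sum : v = ∑ j, v j • (Pi.single j (1:ℝ) : Fin m → ℝ) := by
      funext k
      simp [Pi.single_apply, Finset.sum_apply, mul_comm]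
    conv_lhs => rw [hv_sum]
    rw [map_sum]
    simp [pd, Finset.sum_apply, mul_comm]
  -- mean value theorem coordinatewise
  have hmvt : ∀ i : Fin m, ∃ ξ ∈ closedBall yh r₂,
      G y i - G yh i = ∑ j, pd G ξ i j * v j := by
    intro i
    have key : ∀ t : ℝ, HasDerivAt (fun t : ℝ => G (yh + t • v) i)
        ((fderiv ℝ G (yh + t • v)) v i) t := by
      intro t
      have h1 : HasDerivAt (fun t : ℝ => yh + t • v) v t := by
        simpa using ((hasDerivAt_id t).smul_const v).const_add yh
      have h2 := ((hdiff (yh + t • v)).hasFDerivAt).comp_hasDerivAt t h1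
      exact (hasDerivAt_pi.mp h2) i
    obtain ⟨c, hc, hceq⟩ := exists_hasDerivAt_eq_slope
      (fun t : ℝ => G (yh + t • v) i)
      (fun t : ℝ => (fderiv ℝ G (yh + t • v)) v i) one_pos
      (fun t _ => (key t).continuousAt.continuousWithinAt)
      (fun t _ => key t)
    refine ⟨yh + c • v, ?_, ?_⟩
    · rw [mem_closedBall, dist_eq_norm]
      have : ‖yh + c • v - yh‖ = |c| * ‖v‖ := by
        simp [norm_smul]
      rw [this]
      calc |c| * ‖v‖ ≤ 1 * ‖v‖ := by
            apply mul_le_mul_of_nonneg_right _ (norm_nonneg v)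
            rw [abs_of_pos hc.1]; exact hc.2.le
        _ = ‖v‖ := one_mul _
        _ ≤ r₂ := hvnorm
    · rw [← hlin (yh + c • v) i, hceq]
      simp [hv]
  choose ξ hξmem hξeq using hmvt
  set M : Matrix (Fin m) (Fin m) ℝ := Matrix.of (fun i j => pd G (ξ i) i j) with hM
  have hMis : IsMVJac G (closedBall yh r₂) M := fun i => ⟨ξ i, hξmem i, fun j => rfl⟩
  have hGy : G y = G yh + M.mulVec v := by
    funext i
    have := hξeq i
    simp only [Matrix.mulVec, dotProduct, hM, Matrix.of_apply, Pi.add_apply]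
    linarith
  have hrw : (y - A.mulVec (G y)) - yh
      = -(A.mulVec (G yh)) + (1 - A * M).mulVec (y - yh) := by
    rw [hGy, Matrix.mulVec_add, Matrix.sub_mulVec, Matrix.one_mulVec,
      ← Matrix.mulVec_mulVec]
    simp only [hv]
    abel
  rw [hrw]
  exact hK y hy M hMis
end

section
/- Let G : ℝ^m → ℝ^m be continuously differentiable, J ⊆ ℝ^m a convex set, and A an m×m real matrix. If for every J-mean-value Jacobian matrix M of G the operator norm of Id − A·M induced by the sup norm is at most ρ, then the map P(y) := y − A·G(y) is Lipschitz on J with Lipschitz constant ρ with respect to the sup norm; i.e., ‖P(y) − P(y')‖_∞ ≤ ρ·‖y − y'‖_∞ for all y, y' ∈ J. -/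
open Matrix Metric

/-- The operator norm of (multiplication by) a matrix, induced by the sup norm on `ℝ^m`. -/
noncomputable def supOpNorm {m : ℕ} (B : Matrix (Fin m) (Fin m) ℝ) : ℝ :=
  ‖LinearMap.toContinuousLinearMap B.mulVecLin‖

lemma clm_apply_eq {m : ℕ} (L : (Fin m → ℝ) →L[ℝ] (Fin m → ℝ)) (w : Fin m → ℝ) (i : Fin m) :
    L w i = ∑ j, w j * L (Pi.single j 1) i := by
  have hvsum : w = ∑ j, w j • (Pi.single j 1 : Fin m → ℝ) := by
    rw [← Finset.univ_sum_single w]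
    congr 1; ext j x
    simp [Pi.single_apply, mul_ite]
  conv_lhs => rw [hvsum]
  rw [map_sum]
  simp [mul_comm]

/-- Componentwise mean value theorem for `G` along the segment from `y'` to `y`. -/
lemma mvt_component {m : ℕ}
    (G : (Fin m → ℝ) → Fin m → ℝ) (hG : ContDiff ℝ 1 G)
    (J : Set (Fin m → ℝ)) (hJ : Convex ℝ J)
    (y : Fin m → ℝ) (hy : y ∈ J) (y' : Fin m → ℝ) (hy' : y' ∈ J) :
    ∀ i : Fin m, ∃ ξ ∈ J, G y i - G y' i = ∑ j, pd G ξ i j * (y - y') j := by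
  intro i
  set v := y - y' with hv
  have hdG := hG.differentiable one_ne_zero
  have hc : ∀ t : ℝ, HasDerivAt (fun t : ℝ => y' + t • v) v t := by
    intro t
    simpa using ((hasDerivAt_id t).smul_const v).const_add y'
  have hderiv : ∀ t : ℝ, HasDerivAt (fun t : ℝ => G (y' + t • v) i)
      ((fderiv ℝ G (y' + t • v) v) i) t := by
    intro t
    have h1 : HasDerivAt (fun t : ℝ => G (y' + t • v))
        ((fderiv ℝ G (y' + t • v)) v) t :=
      (hdG (y' + t • v)).hasFDerivAt.comp_hasDerivAt t (hc t)
    exact ((ContinuousLinearMap.proj (R := ℝ) (φ := fun _ : Fin m => ℝ) i).hasFDerivAt.comp_hasDerivAt t h1)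
  obtain ⟨τ, hτ, heq⟩ := exists_hasDerivAt_eq_slope (fun t : ℝ => G (y' + t • v) i)
    (fun t => (fderiv ℝ G (y' + t • v) v) i) zero_lt_one
    (fun t _ => (hderiv t).continuousAt.continuousWithinAt)
    (fun t _ => hderiv t)
  refine ⟨y' + τ • v, ?_, ?_⟩
  · apply hJ.segment_subset hy' hy
    rw [segment_eq_image']
    exact ⟨τ, ⟨hτ.1.le, hτ.2.le⟩, rfl⟩
  · have h1 : (fderiv ℝ G (y' + τ • v)) v i = G y i - G y' i := by
      rw [heq]
      simp [hv]
    rw [← h1, clm_apply_eq]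
    simp [pd, mul_comm]

/-- If every `J`-mean-value Jacobian matrix `M` of `G` satisfies `‖Id - A M‖_op ≤ ρ` in the
sup-norm operator norm, then `P y = y - A ⬝ G y` is `ρ`-Lipschitz on the convex set `J`. -/
theorem newton_operator_lipschitz {m : ℕ}
    (G : (Fin m → ℝ) → Fin m → ℝ) (hG : ContDiff ℝ 1 G)
    (J : Set (Fin m → ℝ)) (hJ : Convex ℝ J)
    (A : Matrix (Fin m) (Fin m) ℝ) (ρ : ℝ)
    (h : ∀ M : Matrix (Fin m) (Fin m) ℝ, IsMVJac G J M → supOpNorm (1 - A * M) ≤ ρ) :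
    ∀ y ∈ J, ∀ y' ∈ J,
      ‖(y - A.mulVec (G y)) - (y' - A.mulVec (G y'))‖ ≤ ρ * ‖y - y'‖ := by
  intro y hy y' hy'
  choose ξ hξJ hξ using mvt_component G hG J hJ y hy y' hy'
  set M : Matrix (Fin m) (Fin m) ℝ := Matrix.of fun i j => pd G (ξ i) i j with hM
  have hMV : IsMVJac G J M := fun i => ⟨ξ i, hξJ i, fun j => rfl⟩
  have hGdiff : G y - G y' = M.mulVec (y - y') := by
    funext i
    simpa [Matrix.mulVec, dotProduct, hM] using hξ i
  have hkey : (y - A.mulVec (G y)) - (y' - A.mulVec (G y')) =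
      (1 - A * M).mulVec (y - y') := by
    rw [Matrix.sub_mulVec, Matrix.one_mulVec, ← Matrix.mulVec_mulVec, ← hGdiff,
      Matrix.mulVec_sub]
    abel
  rw [hkey]
  calc ‖(1 - A * M).mulVec (y - y')‖
      = ‖(LinearMap.toContinuousLinearMap (1 - A * M).mulVecLin) (y - y')‖ := rfl
    _ ≤ supOpNorm (1 - A * M) * ‖y - y'‖ :=
        (LinearMap.toContinuousLinearMap (1 - A * M).mulVecLin).le_opNorm _
    _ ≤ ρ * ‖y - y'‖ := mul_le_mul_of_nonneg_right (h M hMV) (norm_nonneg _)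
end

section
/- Let G : ℝ^m → ℝ^m be continuously differentiable and suppose the square Krawczyk condition holds for (G, ŷ, r₂, A, ρ) with r₂ > 0 and ρ ∈ (0,1). Then the matrix A is invertible, and for every y ∈ J the Jacobian matrix D G(y) = (∂g_i/∂y_j(y)) is invertible. -/
/-!
Evaluating the Krawczyk condition at `ŷ + v` and `ŷ - v` cancels the constant term `-A·G(ŷ)`, so
`‖(Id - A·M) v‖ ≤ ρ r₂` whenever `‖v‖ ≤ r₂`. A nonzero kernel vector of `A·M`, rescaled to norm
`r₂`, would then give `r₂ ≤ ρ r₂`; hence `A·M` is invertible. Taking for `M` the Jacobian at a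
point of `J`, invertibility of the product gives that of both factors.
-/

open Matrix Metric

/-- The Jacobian matrix of `G` at `y`. -/
noncomputable def jacMat {m : ℕ} (G : (Fin m → ℝ) → Fin m → ℝ)
    (y : Fin m → ℝ) : Matrix (Fin m) (Fin m) ℝ :=
  Matrix.of fun i j => pd G y i j

theorem LinearMap.norm_le_of_norm_const_add_le {E F : Type*} [SeminormedAddCommGroup E]
    [Module ℝ E] [SeminormedAddCommGroup F] [NormedSpace ℝ F] (f : E →ₗ[ℝ] F) (c : F)
    {r K : ℝ} (h : ∀ v : E, ‖v‖ ≤ r → ‖c + f v‖ ≤ K) {v : E} (hv : ‖v‖ ≤ r) :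
    ‖f v‖ ≤ K := by
  have hdiff : (2 : ℝ) • f v = (c + f v) - (c + f (-v)) := by
    rw [map_neg]
    module
  have h2 : 2 * ‖f v‖ ≤ K + K := by
    calc 2 * ‖f v‖ = ‖(2 : ℝ) • f v‖ := by rw [norm_smul, Real.norm_two]
      _ ≤ ‖c + f v‖ + ‖c + f (-v)‖ := hdiff ▸ norm_sub_le _ _
      _ ≤ K + K := add_le_add (h v hv) (h (-v) (by rwa [norm_neg]))
  linarith

theorem Matrix.isUnit_of_norm_one_sub_mulVec_le {n : Type*} [Fintype n] [DecidableEq n]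
    (B : Matrix n n ℝ) {r ρ : ℝ} (hr : 0 < r) (hρ : ρ < 1)
    (h : ∀ v : n → ℝ, ‖v‖ ≤ r → ‖(1 - B) *ᵥ v‖ ≤ ρ * r) : IsUnit B := by
  by_contra hB
  obtain ⟨v, hv0, hBv⟩ : ∃ v ≠ 0, B *ᵥ v = 0 := by
    rwa [exists_mulVec_eq_zero_iff, ← not_ne_iff, ← isUnit_iff_ne_zero, ← isUnit_iff_isUnit_det]
  set w := (r / ‖v‖) • v
  have hw : ‖w‖ = r := by
    rw [norm_smul, Real.norm_of_nonneg (by positivity), div_mul_cancel₀ _ (norm_ne_zero_iff.mpr hv0)]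
  have hBw : (1 - B) *ᵥ w = w := by
    rw [sub_mulVec, one_mulVec, mulVec_smul, hBv, smul_zero, sub_zero]
  have hr_le : r ≤ ρ * r := by simpa only [hBw, hw] using h w hw.le
  nlinarith

theorem isMVJac_jacMat {m : ℕ} (G : (Fin m → ℝ) → Fin m → ℝ) {S : Set (Fin m → ℝ)}
    {y : Fin m → ℝ} (hy : y ∈ S) : IsMVJac G S (jacMat G y) :=
  fun _ => ⟨y, hy, fun _ => rfl⟩

namespace SquareKrawczykCond

variable {m : ℕ} {G : (Fin m → ℝ) → Fin m → ℝ} {yh : Fin m → ℝ} {r₂ : ℝ}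
  {A : Matrix (Fin m) (Fin m) ℝ} {ρ : ℝ}

theorem norm_one_sub_mul_mulVec_le (hK : SquareKrawczykCond G yh r₂ A ρ)
    {M : Matrix (Fin m) (Fin m) ℝ} (hM : IsMVJac G (closedBall yh r₂) M)
    {v : Fin m → ℝ} (hv : ‖v‖ ≤ r₂) : ‖(1 - A * M) *ᵥ v‖ ≤ ρ * r₂ := by
  refine (1 - A * M).mulVecLin.norm_le_of_norm_const_add_le (-(A *ᵥ G yh)) (fun u hu => ?_) hv
  have hu' : yh + u ∈ closedBall yh r₂ := by
    rwa [mem_closedBall_iff_norm, add_sub_cancel_left]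
  simpa only [mulVecLin_apply, add_sub_cancel_left] using hK (yh + u) hu' M hM

theorem isUnit_mul_jacMat (hK : SquareKrawczykCond G yh r₂ A ρ) (hr₂ : 0 < r₂) (hρ : ρ < 1)
    {y : Fin m → ℝ} (hy : y ∈ closedBall yh r₂) : IsUnit (A * jacMat G y) :=
  (A * jacMat G y).isUnit_of_norm_one_sub_mulVec_le hr₂ hρ fun _ hv =>
    hK.norm_one_sub_mul_mulVec_le (isMVJac_jacMat G hy) hv

end SquareKrawczykCond

theorem krawczyk_implies_invertible_general {m : ℕ}
    (G : (Fin m → ℝ) → Fin m → ℝ)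
    (yh : Fin m → ℝ) (r₂ : ℝ) (hr₂ : 0 < r₂)
    (A : Matrix (Fin m) (Fin m) ℝ) (ρ : ℝ) (hρ1 : ρ < 1)
    (hK : SquareKrawczykCond G yh r₂ A ρ) :
    IsUnit A ∧ ∀ y ∈ closedBall yh r₂, IsUnit (jacMat G y) :=
  ⟨isUnit_of_mul_isUnit_left (hK.isUnit_mul_jacMat hr₂ hρ1 (mem_closedBall_self hr₂.le)),
    fun _ hy => isUnit_of_mul_isUnit_right (hK.isUnit_mul_jacMat hr₂ hρ1 hy)⟩

/-- Under the square Krawczyk condition, `A` is invertible and the Jacobian of `G` is invertible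
at every point of `J`. -/
theorem krawczyk_implies_invertible {m : ℕ}
    (G : (Fin m → ℝ) → Fin m → ℝ) (hG : ContDiff ℝ 1 G)
    (yh : Fin m → ℝ) (r₂ : ℝ) (hr₂ : 0 < r₂)
    (A : Matrix (Fin m) (Fin m) ℝ) (ρ : ℝ) (hρ0 : 0 < ρ) (hρ1 : ρ < 1)
    (hK : SquareKrawczykCond G yh r₂ A ρ) :
    IsUnit A ∧ ∀ y ∈ closedBall yh r₂, IsUnit (jacMat G y) :=
  krawczyk_implies_invertible_general G yh r₂ hr₂ A ρ hρ1 hK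
end

section
/- Let G : ℝ^m → ℝ^m be continuously differentiable, J ⊆ ℝ^m a convex set, A an m×m real matrix, and ρ ∈ (0,1). If for every J-mean-value Jacobian matrix M of G the operator norm of Id − A·M induced by the sup norm is at most ρ, then G is injective on J. -/
open Matrix

lemma clm_apply_eq_sum {m : ℕ} (L : (Fin m → ℝ) →L[ℝ] (Fin m → ℝ))
    (v : Fin m → ℝ) (i : Fin m) :
    L v i = ∑ j, L (Pi.single j 1) i * v j := by
  have hv : v = ∑ j, v j • (Pi.single j 1 : Fin m → ℝ) := by
    ext k
    simp [Pi.single_apply, Finset.sum_apply, eq_comm]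
  conv_lhs => rw [hv]
  rw [map_sum]
  simp [Finset.sum_apply, mul_comm]

/-- If every `J`-mean-value Jacobian matrix `M` of `G` satisfies `‖Id - A M‖_op ≤ ρ < 1` in the
sup-norm operator norm, then `G` is injective on the convex set `J`. -/
theorem krawczyk_contraction_injective {m : ℕ}
    (G : (Fin m → ℝ) → Fin m → ℝ) (hG : ContDiff ℝ 1 G)
    (J : Set (Fin m → ℝ)) (hJ : Convex ℝ J)
    (A : Matrix (Fin m) (Fin m) ℝ) (ρ : ℝ) (hρ0 : 0 < ρ) (hρ1 : ρ < 1)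
    (h : ∀ M : Matrix (Fin m) (Fin m) ℝ, IsMVJac G J M → supOpNorm (1 - A * M) ≤ ρ) :
    Set.InjOn G J := by
  intro x hx y hy hxy
  by_contra hne
  have hdiff : Differentiable ℝ G := hG.differentiable one_ne_zero
  -- mean value: for each i find ξ with ∂G_i at ξ in direction y-x equal to 0
  have key : ∀ i : Fin m, ∃ ξ ∈ J, (fderiv ℝ G ξ) (y - x) i = 0 := by
    intro i
    have hpath : ∀ t : ℝ, HasDerivAt (fun t : ℝ => x + t • (y - x)) (y - x) t := by
      intro t
      simpa using ((hasDerivAt_id t).smul_const (y - x)).const_add x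
    have hder : ∀ t : ℝ,
        HasDerivAt (fun t : ℝ => G (x + t • (y - x)) i)
          ((fderiv ℝ G (x + t • (y - x))) (y - x) i) t := by
      intro t
      have h1 : HasFDerivAt G (fderiv ℝ G (x + t • (y - x))) (x + t • (y - x)) :=
        (hdiff _).hasFDerivAt
      have h2 : HasDerivAt (fun t : ℝ => G (x + t • (y - x)))
          ((fderiv ℝ G (x + t • (y - x))) (y - x)) t :=
        h1.comp_hasDerivAt t (hpath t)
      exact (hasDerivAt_pi.mp h2) i
    obtain ⟨c, hc, hceq⟩ := exists_hasDerivAt_eq_slope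
      (fun t : ℝ => G (x + t • (y - x)) i)
      (fun t : ℝ => (fderiv ℝ G (x + t • (y - x))) (y - x) i)
      (by norm_num : (0:ℝ) < 1)
      (fun t _ => (hder t).continuousAt.continuousWithinAt)
      (fun t _ => hder t)
    refine ⟨x + c • (y - x), ?_, ?_⟩
    · have hmem : (1 - c) • x + c • y ∈ J :=
        hJ hx hy (by linarith [hc.2]) (le_of_lt hc.1) (by ring)
      have : x + c • (y - x) = (1 - c) • x + c • y := by
        simp [smul_sub, sub_smul]
        abel
      rw [this]; exact hmem
    · rw [hceq]
      simp [hxy]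
  choose ξ hξJ hξ0 using key
  set M : Matrix (Fin m) (Fin m) ℝ := fun i j => pd G (ξ i) i j with hM
  have hMV : IsMVJac G J M := fun i => ⟨ξ i, hξJ i, fun j => rfl⟩
  have hM0 : M.mulVec (y - x) = 0 := by
    ext i
    have := clm_apply_eq_sum (fderiv ℝ G (ξ i)) (y - x) i
    rw [hξ0 i] at this
    simpa [Matrix.mulVec, dotProduct, hM, pd] using this.symm
  have hfix : (1 - A * M).mulVec (y - x) = y - x := by
    rw [Matrix.sub_mulVec, Matrix.one_mulVec, ← Matrix.mulVec_mulVec, hM0,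
      Matrix.mulVec_zero, sub_zero]
  have hle : ‖y - x‖ ≤ ρ * ‖y - x‖ := by
    have h1 := (LinearMap.toContinuousLinearMap (1 - A * M).mulVecLin).le_opNorm (y - x)
    have h2 : (LinearMap.toContinuousLinearMap (1 - A * M).mulVecLin) (y - x)
        = (1 - A * M).mulVec (y - x) := rfl
    rw [h2, hfix] at h1
    calc ‖y - x‖ ≤ supOpNorm (1 - A * M) * ‖y - x‖ := h1
      _ ≤ ρ * ‖y - x‖ := by
        have := h M hMV
        have hnn : (0:ℝ) ≤ ‖y - x‖ := norm_nonneg _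
        nlinarith
  have hpos : (0:ℝ) < ‖y - x‖ := by
    rw [norm_pos_iff]
    intro h0
    exact hne (sub_eq_zero.mp h0).symm
  nlinarith
end

section
/- Let F : ℝ^d × ℝ^m → ℝ^m be continuously differentiable and suppose the Krawczyk condition holds for (F, x̂, ŷ, r₁, r₂, A, ρ) with r₂ > 0 and ρ ∈ (0,1). Then every zero of F in I × J lies strictly inside the box in the y-direction: if x ∈ I, y ∈ J and F(x, y) = 0, then ‖y − ŷ‖_∞ ≤ ρ·r₂ < r₂. In particular F has no zeros on the top and bottom I × ∂J = {(x,y) : x ∈ I, ‖y − ŷ‖_∞ = r₂}. -/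
open Matrix Metric

/-- Zeros of `F` in `I × J` lie strictly inside the box in the `y`-direction; in particular
there are no zeros on the top and bottom `I × ∂J`. -/
theorem zeros_strictly_inside {d m : ℕ}
    (F : (Fin d → ℝ) × (Fin m → ℝ) → Fin m → ℝ) (hF : ContDiff ℝ 1 F)
    (xh : Fin d → ℝ) (yh : Fin m → ℝ) (r₁ r₂ : ℝ) (hr₁ : 0 < r₁) (hr₂ : 0 < r₂)
    (A : Matrix (Fin m) (Fin m) ℝ) (ρ : ℝ) (hρ0 : 0 < ρ) (hρ1 : ρ < 1)
    (hK : KrawczykCond F xh yh r₁ r₂ A ρ) :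
    (∀ x ∈ closedBall xh r₁, ∀ y ∈ closedBall yh r₂,
      F (x, y) = 0 → ‖y - yh‖ ≤ ρ * r₂ ∧ ρ * r₂ < r₂) ∧
    ∀ x ∈ closedBall xh r₁, ∀ y : Fin m → ℝ, ‖y - yh‖ = r₂ → F (x, y) ≠ 0 := by
  have hρr : ρ * r₂ < r₂ := by nlinarith
  have hdiff : Differentiable ℝ F := hF.differentiable one_ne_zero
  have key : ∀ x ∈ closedBall xh r₁, ∀ y ∈ closedBall yh r₂,
      F (x, y) = 0 → ‖y - yh‖ ≤ ρ * r₂ := by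
    intro x hx y hy hFz
    set v : Fin m → ℝ := y - yh with hv
    have hnv : ‖v‖ ≤ r₂ := by
      rw [hv, ← dist_eq_norm]; exact mem_closedBall.mp hy
    have hMVT : ∀ i : Fin m, ∃ ξ ∈ (closedBall xh r₁ ×ˢ closedBall yh r₂),
        fderiv ℝ F ξ (0, v) i = F (x, y) i - F (x, yh) i := by
      intro i
      have hpath : ∀ t : ℝ, HasDerivAt
          (fun t : ℝ => ((x, yh + t • v) : (Fin d → ℝ) × (Fin m → ℝ))) (0, v) t := by
        intro t
        exact (hasDerivAt_const t x).prodMk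
          (by simpa using ((hasDerivAt_id t).smul_const v).const_add yh)
      have hg : ∀ t : ℝ, HasDerivAt (fun t : ℝ => F (x, yh + t • v) i)
          (fderiv ℝ F (x, yh + t • v) (0, v) i) t := by
        intro t
        have h1 : HasDerivAt (fun t : ℝ => F (x, yh + t • v))
            (fderiv ℝ F (x, yh + t • v) (0, v)) t :=
          (hdiff _).hasFDerivAt.comp_hasDerivAt t (hpath t)
        exact hasDerivAt_pi.mp h1 i
      obtain ⟨c, hc, hceq⟩ := exists_hasDerivAt_eq_slope
        (fun t : ℝ => F (x, yh + t • v) i)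
        (fun t : ℝ => fderiv ℝ F (x, yh + t • v) (0, v) i) one_pos
        (fun t _ => (hg t).continuousAt.continuousWithinAt)
        (fun t _ => hg t)
      refine ⟨(x, yh + c • v), ⟨hx, ?_⟩, ?_⟩
      · rw [mem_closedBall, dist_eq_norm]
        have : yh + c • v - yh = c • v := by abel
        rw [this, norm_smul]
        calc ‖c‖ * ‖v‖ ≤ 1 * ‖v‖ := by
              apply mul_le_mul_of_nonneg_right _ (norm_nonneg v)
              rw [Real.norm_eq_abs, abs_le]
              constructor <;> [linarith [hc.1]; linarith [hc.2]]
          _ ≤ r₂ := by simpa using hnv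
      · rw [hceq]
        have h1 : yh + (1 : ℝ) • v = y := by rw [hv]; simp
        have h0 : yh + (0 : ℝ) • v = yh := by simp
        rw [h1, h0]; ring
    choose ξ hξmem hξeq using hMVT
    set M : Matrix (Fin m) (Fin m) ℝ := fun i j => pdY F (ξ i) i j with hM
    have hMJ : IsMVJacY F (closedBall xh r₁ ×ˢ closedBall yh r₂) M :=
      fun i => ⟨ξ i, hξmem i, fun j => rfl⟩
    have hsum : ∀ p : (Fin d → ℝ) × (Fin m → ℝ),
        fderiv ℝ F p (0, v) = ∑ j, v j • fderiv ℝ F p (0, Pi.single j 1) := by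
      intro p
      have h0 : (((0 : Fin d → ℝ), v) : (Fin d → ℝ) × (Fin m → ℝ)) =
          ∑ j, (((0 : Fin d → ℝ), v j • (Pi.single j 1 : Fin m → ℝ)) : (Fin d → ℝ) × (Fin m → ℝ)) := by
        refine Prod.ext ?_ ?_
        · simp [Prod.fst_sum]
        · simp only [Prod.snd_sum]
          funext k
          simp [Finset.sum_apply, Pi.single_apply]
      rw [h0, map_sum]
      refine Finset.sum_congr rfl fun j _ => ?_
      have hsm : (((0 : Fin d → ℝ), v j • (Pi.single j 1 : Fin m → ℝ)) : (Fin d → ℝ) × (Fin m → ℝ))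
          = v j • (((0 : Fin d → ℝ), Pi.single j 1) : (Fin d → ℝ) × (Fin m → ℝ)) := by
        rw [Prod.smul_mk, smul_zero]
      rw [hsm]; exact (fderiv ℝ F p).map_smul _ _
    have hMv : ∀ i, M.mulVec v i = F (x, y) i - F (x, yh) i := by
      intro i
      rw [← hξeq i, hsum (ξ i)]
      simp [Matrix.mulVec, dotProduct, hM, pdY, mul_comm, Finset.sum_apply]
    have hMveq : M.mulVec v = -(F (x, yh)) := by
      funext i
      rw [hMv i, hFz]
      simp
    have hkey : -(A.mulVec (F (x, yh))) + (1 - A * M).mulVec v = v := by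
      rw [Matrix.sub_mulVec, Matrix.one_mulVec, ← Matrix.mulVec_mulVec, hMveq]
      simp [Matrix.mulVec_neg]
    have := hK x hx y hy M hMJ
    rw [← hv, hkey] at this
    exact this
  refine ⟨fun x hx y hy hz => ⟨key x hx y hy hz, hρr⟩, ?_⟩
  intro x hx y hny hz
  have hy : y ∈ closedBall yh r₂ := by
    rw [mem_closedBall, dist_eq_norm, hny]
  have := key x hx y hy hz
  rw [hny] at this
  linarith
end

section
/- Let F : ℝ^d × ℝ^m → ℝ^m be continuously differentiable and suppose the Krawczyk condition holds for (F, x̂, ŷ, r₁, r₂, A, ρ) with r₂ > 0 and ρ ∈ (0,1). Then there is a unique function g : I → J such that F(x, g(x)) = 0 for all x ∈ I, the zero set of F inside I × J is exactly the graph {(x, g(x)) : x ∈ I}, and g is continuous on I. -/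
open Matrix Metric

/-- Componentwise mean value theorem in the `y`-variables. -/
lemma fderiv_eq_sum_pdY {d m : ℕ} (F : (Fin d → ℝ) × (Fin m → ℝ) → Fin m → ℝ)
    (ξ : (Fin d → ℝ) × (Fin m → ℝ)) (v : Fin m → ℝ) (i : Fin m) :
    fderiv ℝ F ξ ((0 : Fin d → ℝ), v) i = ∑ j, v j * pdY F ξ i j := by
  have hv : ((0 : Fin d → ℝ), v) =
      ∑ j, v j • (((0 : Fin d → ℝ), Pi.single j (1:ℝ)) : (Fin d → ℝ) × (Fin m → ℝ)) := by
    refine Prod.ext ?_ ?_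
    · simp [Prod.fst_sum]
    · simp only [Prod.snd_sum, Prod.smul_mk]
      funext k
      simp [Finset.sum_apply, Pi.single_apply]
  rw [hv, map_sum, Finset.sum_apply]
  refine Finset.sum_congr rfl fun j _ => ?_
  rw [_root_.map_smul]
  simp [pdY]

lemma mvt_aux {d m : ℕ} (F : (Fin d → ℝ) × (Fin m → ℝ) → Fin m → ℝ) (hF : ContDiff ℝ 1 F)
    (xh : Fin d → ℝ) (yh : Fin m → ℝ) (r₁ r₂ : ℝ)
    {x : Fin d → ℝ} (hx : x ∈ closedBall xh r₁)
    {y y' : Fin m → ℝ} (hy : y ∈ closedBall yh r₂) (hy' : y' ∈ closedBall yh r₂) :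
    ∃ M : Matrix (Fin m) (Fin m) ℝ,
      IsMVJacY F (closedBall xh r₁ ×ˢ closedBall yh r₂) M ∧
      F (x, y) - F (x, y') = M.mulVec (y - y') := by
  set v : Fin m → ℝ := y - y' with hvdef
  have hFd : Differentiable ℝ F := hF.differentiable one_ne_zero
  have hψd : ∀ t : ℝ, HasDerivAt (fun s : ℝ => ((x, y' + s • v) : (Fin d → ℝ) × (Fin m → ℝ)))
      ((0 : Fin d → ℝ), v) t := by
    intro t
    have h2 : HasDerivAt (fun s : ℝ => y' + s • v) v t := by
      simpa using ((hasDerivAt_id t).smul_const v).const_add y'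
    exact (hasDerivAt_const t x).prodMk h2
  have key : ∀ t : ℝ, ∀ i : Fin m, HasDerivAt (fun s : ℝ => F (x, y' + s • v) i)
      (fderiv ℝ F (x, y' + t • v) ((0 : Fin d → ℝ), v) i) t := by
    intro t i
    have hc := ((hFd _).hasFDerivAt.comp_hasDerivAt t (hψd t))
    exact hasDerivAt_pi.1 hc i
  have hc : ∀ i : Fin m, ∃ c ∈ Set.Ioo (0:ℝ) 1,
      fderiv ℝ F (x, y' + c • v) ((0 : Fin d → ℝ), v) i = F (x, y) i - F (x, y') i := by
    intro i
    have hcont : ContinuousOn (fun s : ℝ => F (x, y' + s • v) i) (Set.Icc 0 1) :=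
      (continuous_iff_continuousAt.2 fun s => (key s i).continuousAt).continuousOn
    obtain ⟨c, hcm, heq⟩ := exists_hasDerivAt_eq_slope (fun s : ℝ => F (x, y' + s • v) i)
      (fun s => fderiv ℝ F (x, y' + s • v) ((0 : Fin d → ℝ), v) i) one_pos hcont
      (fun t _ => key t i)
    refine ⟨c, hcm, ?_⟩
    rw [heq]
    norm_num [hvdef]
  choose c hcm hceq using hc
  refine ⟨Matrix.of fun i j => pdY F (x, y' + c i • v) i j, ?_, ?_⟩
  · intro i
    refine ⟨(x, y' + c i • v), ⟨hx, ?_⟩, fun j => rfl⟩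
    exact (convex_closedBall yh r₂).add_smul_sub_mem hy' hy ⟨(hcm i).1.le, (hcm i).2.le⟩
  · funext i
    have := hceq i
    rw [fderiv_eq_sum_pdY] at this
    simp only [Pi.sub_apply, Matrix.mulVec, dotProduct, Matrix.of_apply]
    rw [← this]
    exact Finset.sum_congr rfl fun j _ => mul_comm _ _

/-- Under the Krawczyk condition, the zero set of `F` inside `I × J` is the graph of a unique
continuous function `g : I → J`. -/
theorem krawczyk_graph {d m : ℕ}
    (F : (Fin d → ℝ) × (Fin m → ℝ) → Fin m → ℝ) (hF : ContDiff ℝ 1 F)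
    (xh : Fin d → ℝ) (yh : Fin m → ℝ) (r₁ r₂ : ℝ) (hr₁ : 0 < r₁) (hr₂ : 0 < r₂)
    (A : Matrix (Fin m) (Fin m) ℝ) (ρ : ℝ) (hρ0 : 0 < ρ) (hρ1 : ρ < 1)
    (hK : KrawczykCond F xh yh r₁ r₂ A ρ) :
    ∃ g : (Fin d → ℝ) → Fin m → ℝ,
      (∀ x ∈ closedBall xh r₁, g x ∈ closedBall yh r₂ ∧ F (x, g x) = 0) ∧
      ({p : (Fin d → ℝ) × (Fin m → ℝ) |
          p ∈ closedBall xh r₁ ×ˢ closedBall yh r₂ ∧ F p = 0} =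
        (fun x => (x, g x)) '' closedBall xh r₁) ∧
      ContinuousOn g (closedBall xh r₁) ∧
      ∀ g' : (Fin d → ℝ) → Fin m → ℝ,
        (∀ x ∈ closedBall xh r₁, g' x ∈ closedBall yh r₂ ∧ F (x, g' x) = 0) →
        ∀ x ∈ closedBall xh r₁, g' x = g x := by
  have hI : xh ∈ closedBall xh r₁ := mem_closedBall_self hr₁.le
  have hJ : yh ∈ closedBall yh r₂ := mem_closedBall_self hr₂.le
  -- operator-norm-type bound from the Krawczyk condition
  have hop : ∀ M : Matrix (Fin m) (Fin m) ℝ,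
      IsMVJacY F (closedBall xh r₁ ×ˢ closedBall yh r₂) M →
      ∀ v : Fin m → ℝ, ‖v - A.mulVec (M.mulVec v)‖ ≤ ρ * ‖v‖ := by
    intro M hM v
    have hrw : ∀ w : Fin m → ℝ, (1 - A * M).mulVec w = w - A.mulVec (M.mulVec w) := by
      intro w
      rw [Matrix.sub_mulVec, Matrix.one_mulVec, Matrix.mulVec_mulVec]
    rcases eq_or_ne v 0 with rfl | hv
    · simp
    have hvn : 0 < ‖v‖ := norm_pos_iff.2 hv
    set c : ℝ := r₂ / ‖v‖ with hc
    have hc0 : 0 < c := div_pos hr₂ hvn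
    have hnv' : ‖c • v‖ = r₂ := by
      rw [norm_smul, Real.norm_eq_abs, abs_of_pos hc0, hc, div_mul_cancel₀ _ hvn.ne']
    have hy1 : yh + c • v ∈ closedBall yh r₂ := by
      rw [mem_closedBall, dist_eq_norm, add_sub_cancel_left, hnv']
    have hy2 : yh - c • v ∈ closedBall yh r₂ := by
      rw [mem_closedBall, dist_eq_norm, sub_sub_cancel_left, norm_neg, hnv']
    have h1 := hK xh hI (yh + c • v) hy1 M hM
    have h2 := hK xh hI (yh - c • v) hy2 M hM
    rw [add_sub_cancel_left] at h1
    rw [sub_sub_cancel_left, Matrix.mulVec_neg] at h2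
    set w := A.mulVec (F (xh, yh)) with hw
    set u := (1 - A * M).mulVec (c • v) with hu
    have h3 : ‖u‖ ≤ ρ * r₂ := by
      have key : u = (2⁻¹ : ℝ) • ((-w + u) - (-w + -u)) := by module
      have h4 : ‖u‖ = 2⁻¹ * ‖(-w + u) - (-w + -u)‖ := by
        have habel : (-w + u) - (-w + -u) = (2 : ℝ) • u := by
          rw [two_smul]; abel
        rw [habel, norm_smul]
        simp [Real.norm_eq_abs]
      have h5 := norm_sub_le (-w + u) (-w + -u)
      nlinarith
    have h4 : u = c • (1 - A * M).mulVec v := by rw [hu, Matrix.mulVec_smul]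
    have h5 : c * ‖(1 - A * M).mulVec v‖ ≤ ρ * r₂ := by
      rw [← abs_of_pos hc0, ← Real.norm_eq_abs, ← norm_smul, ← h4]; exact h3
    have h6 : ‖(1 - A * M).mulVec v‖ ≤ ρ * ‖v‖ := by
      have : ρ * r₂ = c * (ρ * ‖v‖) := by
        rw [hc]; field_simp
      rw [this] at h5
      exact le_of_mul_le_mul_left h5 hc0
    rw [← hrw]; exact h6
  -- A has trivial kernel
  have hAinj : ∀ u : Fin m → ℝ, A.mulVec u = 0 → u = 0 := by
    set M₀ : Matrix (Fin m) (Fin m) ℝ := Matrix.of fun i j => pdY F (xh, yh) i j with hM₀def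
    have hM₀ : IsMVJacY F (closedBall xh r₁ ×ˢ closedBall yh r₂) M₀ :=
      fun i => ⟨(xh, yh), ⟨hI, hJ⟩, fun j => rfl⟩
    have hker : ∀ u : Fin m → ℝ, (A * M₀).mulVec u = 0 → u = 0 := by
      intro u hu
      have h := hop M₀ hM₀ u
      rw [Matrix.mulVec_mulVec, hu, sub_zero] at h
      have : (1 - ρ) * ‖u‖ ≤ 0 := by nlinarith
      have : ‖u‖ ≤ 0 := by nlinarith
      exact norm_le_zero_iff.1 this
    have hinj : Function.Injective ((A * M₀).mulVec) := by
      intro u₁ u₂ h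
      have := hker (u₁ - u₂) (by rw [Matrix.mulVec_sub, h, sub_self])
      exact sub_eq_zero.1 this
    have hud : IsUnit (A * M₀).det := (Matrix.isUnit_iff_isUnit_det _).1
      (Matrix.mulVec_injective_iff_isUnit.1 hinj)
    rw [Matrix.det_mul] at hud
    have hA : IsUnit A := (Matrix.isUnit_iff_isUnit_det _).2 (isUnit_of_mul_isUnit_left hud)
    intro u hu
    have := Matrix.mulVec_injective_iff_isUnit.2 hA (a₁ := u) (a₂ := 0)
    simp only [Matrix.mulVec_zero] at this
    exact this hu
  -- uniqueness of zeros
  have huniq : ∀ x ∈ closedBall xh r₁, ∀ y ∈ closedBall yh r₂, ∀ y' ∈ closedBall yh r₂,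
      F (x, y) = 0 → F (x, y') = 0 → y = y' := by
    intro x hx y hy y' hy' h0 h0'
    obtain ⟨M, hM, hMeq⟩ := mvt_aux F hF xh yh r₁ r₂ hx hy hy'
    rw [h0, h0', sub_self] at hMeq
    have := hop M hM (y - y')
    rw [← hMeq, Matrix.mulVec_zero, sub_zero] at this
    have h : (1 - ρ) * ‖y - y'‖ ≤ 0 := by nlinarith
    have : ‖y - y'‖ ≤ 0 := by nlinarith
    have := norm_le_zero_iff.1 this
    exact sub_eq_zero.1 this
  -- Krawczyk map sends J into J
  have hmaps : ∀ x ∈ closedBall xh r₁, ∀ y ∈ closedBall yh r₂,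
      y - A.mulVec (F (x, y)) ∈ closedBall yh r₂ := by
    intro x hx y hy
    obtain ⟨M, hM, hMeq⟩ := mvt_aux F hF xh yh r₁ r₂ hx hy hJ
    have hFy : F (x, y) = F (x, yh) + M.mulVec (y - yh) := by
      rw [← hMeq]; abel
    have halg : y - A.mulVec (F (x, y)) - yh =
        -(A.mulVec (F (x, yh))) + (1 - A * M).mulVec (y - yh) := by
      rw [hFy, Matrix.mulVec_add, Matrix.sub_mulVec, Matrix.one_mulVec, Matrix.mulVec_mulVec]
      abel
    rw [mem_closedBall, dist_eq_norm, halg]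
    calc ‖-(A.mulVec (F (x, yh))) + (1 - A * M).mulVec (y - yh)‖ ≤ ρ * r₂ :=
          hK x hx y hy M hM
      _ ≤ r₂ := by nlinarith
  -- existence of zeros via Banach fixed point
  have hex : ∀ x ∈ closedBall xh r₁, ∃ y ∈ closedBall yh r₂, F (x, y) = 0 := by
    intro x hx
    haveI hne : Nonempty (closedBall yh r₂) := ⟨⟨yh, hJ⟩⟩
    haveI : CompleteSpace (closedBall yh r₂) :=
      (isClosed_closedBall (x := yh) (ε := r₂)).completeSpace_coe
    set T : closedBall yh r₂ → closedBall yh r₂ :=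
      fun y => ⟨y.1 - A.mulVec (F (x, y.1)), hmaps x hx y.1 y.2⟩ with hT
    have hlip : LipschitzWith ⟨ρ, hρ0.le⟩ T := by
      refine LipschitzWith.of_dist_le_mul ?_
      rintro ⟨a, ha⟩ ⟨b, hb⟩
      obtain ⟨M, hM, hMeq⟩ := mvt_aux F hF xh yh r₁ r₂ hx ha hb
      have h1 : (a - A.mulVec (F (x, a))) - (b - A.mulVec (F (x, b))) =
          (a - b) - A.mulVec (M.mulVec (a - b)) := by
        rw [← hMeq, Matrix.mulVec_sub]; abel
      simp only [Subtype.dist_eq, hT, dist_eq_norm]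
      rw [h1]
      exact hop M hM (a - b)
    have hcw : ContractingWith ⟨ρ, hρ0.le⟩ T := ⟨by exact_mod_cast hρ1, hlip⟩
    obtain ⟨y, hy⟩ : ∃ y : closedBall yh r₂, Function.IsFixedPt T y :=
      ⟨ContractingWith.fixedPoint T hcw, hcw.fixedPoint_isFixedPt⟩
    have h0 : A.mulVec (F (x, y.1)) = 0 := by
      have := congrArg Subtype.val hy
      simp only [hT] at this
      have : y.1 - A.mulVec (F (x, y.1)) = y.1 := this
      linear_combination (norm := abel) -this
    exact ⟨y.1, y.2, hAinj _ h0⟩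
  choose! g hgJ hg0 using hex
  refine ⟨g, fun x hx => ⟨hgJ x hx, hg0 x hx⟩, ?_, ?_, ?_⟩
  · ext p
    obtain ⟨x, y⟩ := p
    simp only [Set.mem_setOf_eq, Set.mem_image, Set.mem_prod]
    constructor
    · rintro ⟨⟨hx, hy⟩, h0⟩
      exact ⟨x, hx, by rw [huniq x hx (g x) (hgJ x hx) y hy (hg0 x hx) h0]⟩
    · rintro ⟨x', hx', heq⟩
      obtain ⟨rfl, rfl⟩ : x' = x ∧ g x' = y := ⟨congrArg Prod.fst heq, congrArg Prod.snd heq⟩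
      exact ⟨⟨hx', hgJ x' hx'⟩, hg0 x' hx'⟩
  · intro x₀ hx₀
    have hbound : ∀ x ∈ closedBall xh r₁,
        dist (g x) (g x₀) ≤ ‖A.mulVec (F (x, g x₀))‖ / (1 - ρ) := by
      intro x hx
      obtain ⟨M, hM, hMeq⟩ := mvt_aux F hF xh yh r₁ r₂ hx (hgJ x hx) (hgJ x₀ hx₀)
      set v : Fin m → ℝ := g x - g x₀ with hv
      have h1 : v - A.mulVec (M.mulVec v) = v + A.mulVec (F (x, g x₀)) := by
        rw [← hMeq, Matrix.mulVec_sub, hg0 x hx, Matrix.mulVec_zero]; abel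
      have h2 : ‖v + A.mulVec (F (x, g x₀))‖ ≤ ρ * ‖v‖ := by
        rw [← h1]; exact hop M hM v
      have h3 : ‖v‖ ≤ ρ * ‖v‖ + ‖A.mulVec (F (x, g x₀))‖ := by
        calc ‖v‖ = ‖(v + A.mulVec (F (x, g x₀))) - A.mulVec (F (x, g x₀))‖ := by
              congr 1; abel
          _ ≤ ‖v + A.mulVec (F (x, g x₀))‖ + ‖A.mulVec (F (x, g x₀))‖ := norm_sub_le _ _
          _ ≤ ρ * ‖v‖ + ‖A.mulVec (F (x, g x₀))‖ := by gcongr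
      rw [dist_eq_norm, ← hv]
      rw [le_div_iff₀ (by linarith)]
      nlinarith
    have hcont : ContinuousWithinAt (fun x => ‖A.mulVec (F (x, g x₀))‖ / (1 - ρ))
        (closedBall xh r₁) x₀ := by
      apply ContinuousAt.continuousWithinAt
      have hc1 : Continuous fun x : Fin d → ℝ => A.mulVec (F (x, g x₀)) := by
        have hmv : Continuous fun u : Fin m → ℝ => A.mulVec u :=
          (Matrix.mulVecLin A).continuous_of_finiteDimensional
        exact hmv.comp (hF.continuous.comp (continuous_id.prodMk continuous_const))
      exact ((hc1.norm).div_const _).continuousAt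
    have hzero : ‖A.mulVec (F (x₀, g x₀))‖ / (1 - ρ) = 0 := by
      rw [hg0 x₀ hx₀, Matrix.mulVec_zero, norm_zero, zero_div]
    have htend : Filter.Tendsto (fun x => ‖A.mulVec (F (x, g x₀))‖ / (1 - ρ))
        (nhdsWithin x₀ (closedBall xh r₁)) (nhds 0) := by
      have := hcont
      rw [ContinuousWithinAt, hzero] at this
      exact this
    rw [ContinuousWithinAt, tendsto_iff_dist_tendsto_zero]
    exact squeeze_zero' (eventually_nhdsWithin_of_forall fun x _ => dist_nonneg)
      (eventually_nhdsWithin_of_forall hbound) htend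
  · intro g' hg' x hx
    exact huniq x hx (g' x) (hg' x hx).1 (g x) (hgJ x hx) (hg' x hx).2 (hg0 x hx)
end

section
/- Let F : ℝ^d × ℝ^m → ℝ^m be continuously differentiable, let (x*, y*) satisfy F(x*, y*) = 0 with the m×m partial Jacobian matrix D_yF(x*, y*) invertible, set A := (D_yF(x*, y*))⁻¹, and fix ρ ∈ (0,1). Then there exists ε > 0 such that for all r₂ ∈ (0, ε], all r₁ ∈ (0, r₂²], and all ŷ ∈ ℝ^m with ‖ŷ − y*‖_∞ ≤ r₂², the Krawczyk condition holds for (F, x*, ŷ, r₁, r₂, A, ρ): for every x ∈ I = {x : ‖x − x*‖_∞ ≤ r₁}, every y ∈ J = {y : ‖y − ŷ‖_∞ ≤ r₂}, and every (I×J)-mean-value Jacobian matrix M, ‖−A·F(x, ŷ) + (Id − A·M)(y − ŷ)‖_∞ ≤ ρ·r₂. -/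
open Matrix Metric

/-- The partial Jacobian matrix `D_y F (ξ)`. -/
noncomputable def DyF {d m : ℕ} (F : (Fin d → ℝ) × (Fin m → ℝ) → Fin m → ℝ)
    (ξ : (Fin d → ℝ) × (Fin m → ℝ)) : Matrix (Fin m) (Fin m) ℝ :=
  Matrix.of fun i j => pdY F ξ i j

/-- Entrywise bound on a matrix gives a sup-norm bound on `mulVec`. -/
lemma mulVec_norm_le_aux {m : ℕ} (B : Matrix (Fin m) (Fin m) ℝ) (v : Fin m → ℝ)
    (c : ℝ) (hc : 0 ≤ c) (h : ∀ i j, |B i j| ≤ c) :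
    ‖B.mulVec v‖ ≤ (m : ℝ) * c * ‖v‖ := by
  have hnn : (0:ℝ) ≤ (m : ℝ) * c * ‖v‖ := by positivity
  rw [pi_norm_le_iff_of_nonneg hnn]
  intro i
  have : B.mulVec v i = ∑ j, B i j * v j := by
    simp [Matrix.mulVec, dotProduct]
  rw [Real.norm_eq_abs, this]
  calc |∑ j, B i j * v j| ≤ ∑ j, |B i j * v j| := Finset.abs_sum_le_sum_abs _ _
    _ ≤ ∑ _j : Fin m, c * ‖v‖ := by
        apply Finset.sum_le_sum
        intro j _
        rw [abs_mul]
        have h1 : |B i j| ≤ c := h i j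
        have h2 : |v j| ≤ ‖v‖ := by
          rw [← Real.norm_eq_abs]; exact norm_le_pi_norm v j
        exact mul_le_mul h1 h2 (abs_nonneg _) hc
    _ = (m : ℝ) * c * ‖v‖ := by simp [Finset.sum_const, mul_assoc]

/-- Near a regular zero `(x*, y*)` of `F`, with `A` the inverse of the partial Jacobian
`D_y F (x*, y*)`, the Krawczyk condition holds for all sufficiently small radii `r₂`, all
`r₁ ≤ r₂²`, and all centers `ŷ` within `r₂²` of `y*`. -/
theorem krawczyk_condition_eventually_holds {d m : ℕ}
    (F : (Fin d → ℝ) × (Fin m → ℝ) → Fin m → ℝ) (hF : ContDiff ℝ 1 F)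
    (xst : Fin d → ℝ) (yst : Fin m → ℝ) (hzero : F (xst, yst) = 0)
    (hreg : IsUnit (DyF F (xst, yst)))
    (ρ : ℝ) (hρ0 : 0 < ρ) (hρ1 : ρ < 1) :
    ∃ ε > 0, ∀ r₂ : ℝ, 0 < r₂ → r₂ ≤ ε →
      ∀ r₁ : ℝ, 0 < r₁ → r₁ ≤ r₂ ^ 2 →
        ∀ yh : Fin m → ℝ, ‖yh - yst‖ ≤ r₂ ^ 2 →
          KrawczykCond F xst yh r₁ r₂ (DyF F (xst, yst))⁻¹ ρ := by
  classical
  set pt : (Fin d → ℝ) × (Fin m → ℝ) := (xst, yst) with hpt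
  set Dst := DyF F pt with hDst
  set A := Dst⁻¹ with hA
  have hADst : A * Dst = 1 :=
    Matrix.nonsing_inv_mul Dst ((Matrix.isUnit_iff_isUnit_det Dst).mp hreg)
  have hDstEntry : ∀ i j, Dst i j = pdY F pt i j := fun i j => rfl
  clear_value A
  clear_value Dst
  -- bound on entries of A
  obtain ⟨CA, hCA0, hCA⟩ : ∃ C : ℝ, 0 ≤ C ∧ ∀ i j, |A i j| ≤ C := by
    refine ⟨∑ i : Fin m, ∑ j : Fin m, |A i j|,
      Finset.sum_nonneg fun i _ => Finset.sum_nonneg fun j _ => abs_nonneg _, ?_⟩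
    intro i j
    calc |A i j| ≤ ∑ j' : Fin m, |A i j'| :=
          Finset.single_le_sum (f := fun j' => |A i j'|) (fun j' _ => abs_nonneg _)
            (Finset.mem_univ j)
      _ ≤ ∑ i' : Fin m, ∑ j' : Fin m, |A i' j'| :=
          Finset.single_le_sum (f := fun i' => ∑ j' : Fin m, |A i' j'|)
            (fun i' _ => Finset.sum_nonneg fun j' _ => abs_nonneg _) (Finset.mem_univ i)
  have hmCA : (0:ℝ) ≤ (m : ℝ) * CA := mul_nonneg (Nat.cast_nonneg m) hCA0
  have hm2CA : (0:ℝ) ≤ (m : ℝ)^2 * CA := mul_nonneg (by positivity) hCA0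
  have hden1 : (0:ℝ) < 2 * ((m : ℝ)^2 * CA + 1) := by linarith
  -- continuity of the Jacobian entries
  set g : ((Fin d → ℝ) × (Fin m → ℝ)) → (Fin m × Fin m → ℝ) :=
    fun ξ p => pdY F ξ p.1 p.2 with hg
  have hgcont : Continuous g := by
    apply continuous_pi
    intro p
    have h1 : Continuous (fderiv ℝ F) := hF.continuous_fderiv one_ne_zero
    have h2 : Continuous fun ξ => fderiv ℝ F ξ (0, Pi.single p.2 1) :=
      h1.clm_apply continuous_const
    exact (continuous_apply p.1).comp h2
  -- δ' for the Jacobian perturbation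
  set δ' : ℝ := ρ / (2 * ((m : ℝ)^2 * CA + 1)) with hδ'def
  have hδ'pos : 0 < δ' := div_pos hρ0 hden1
  obtain ⟨δc, hδcpos, hδc⟩ := Metric.continuousAt_iff.mp (hgcont.continuousAt : ContinuousAt g pt) (ε := δ') hδ'pos
  -- local Lipschitz constant
  obtain ⟨K, t, ht, hlip⟩ := (hF.contDiffAt).exists_lipschitzOnWith (x := pt)
  obtain ⟨r₀, hr₀pos, hball⟩ := Metric.nhds_basis_closedBall.mem_iff.mp ht
  have hmCAK : (0:ℝ) ≤ (m : ℝ) * CA * (K : ℝ) := mul_nonneg hmCA K.coe_nonneg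
  have hden2 : (0:ℝ) < 2 * ((m : ℝ) * CA * (K : ℝ) + 1) := by linarith
  -- choose ε
  set ε : ℝ := min 1 (min r₀ (min (δc / 4) (ρ / (2 * ((m : ℝ) * CA * (K : ℝ) + 1))))) with hεdef
  have hεpos : 0 < ε := by
    apply lt_min one_pos
    apply lt_min hr₀pos
    apply lt_min (by linarith)
    exact div_pos hρ0 hden2
  have hε1 : ε ≤ 1 := min_le_left _ _
  have hεr₀ : ε ≤ r₀ := le_trans (min_le_right _ _) (min_le_left _ _)
  have hεδc : ε ≤ δc / 4 := le_trans (min_le_right _ _) (le_trans (min_le_right _ _) (min_le_left _ _))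
  have hεK : ε ≤ ρ / (2 * ((m : ℝ) * CA * (K : ℝ) + 1)) :=
    le_trans (min_le_right _ _) (le_trans (min_le_right _ _) (min_le_right _ _))
  clear_value ε
  clear_value δ'
  refine ⟨ε, hεpos, ?_⟩
  intro r₂ hr₂pos hr₂ε r₁ hr₁pos hr₁ yh hyh x hx y hy M hM
  have hr₂1 : r₂ ≤ 1 := le_trans hr₂ε hε1
  have hr₂sq : r₂ ^ 2 ≤ r₂ := by nlinarith
  -- distance of (x, yh) to pt
  have hxst : ‖x - xst‖ ≤ r₁ := by
    rw [← dist_eq_norm]; exact Metric.mem_closedBall.mp hx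
  have hdistxyh : dist (x, yh) pt ≤ r₂ ^ 2 := by
    rw [Prod.dist_eq]
    apply max_le
    · rw [dist_eq_norm]; exact le_trans hxst hr₁
    · rw [dist_eq_norm]; exact hyh
  -- Lipschitz bound on F(x, yh)
  have hmemx : (x, yh) ∈ t := by
    apply hball
    exact Metric.mem_closedBall.mpr (le_trans hdistxyh (le_trans (le_trans hr₂sq hr₂ε) hεr₀))
  have hmempt : pt ∈ t := hball (Metric.mem_closedBall.mpr (by simp [hr₀pos.le]))
  have hFbound : ‖F (x, yh)‖ ≤ (K : ℝ) * r₂ ^ 2 := by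
    have := hlip.dist_le_mul (x, yh) hmemx pt hmempt
    rw [hpt] at this
    rw [hzero] at this
    rw [dist_zero_right] at this
    calc ‖F (x, yh)‖ ≤ (K : ℝ) * dist (x, yh) pt := this
      _ ≤ (K : ℝ) * r₂ ^ 2 := by
          apply mul_le_mul_of_nonneg_left hdistxyh K.coe_nonneg
  -- entrywise bound on Dst - M
  have hMbound : ∀ i j, |(Dst - M) i j| ≤ δ' := by
    intro i j
    obtain ⟨ξ, hξ, hξeq⟩ := hM i
    have hξdist : dist ξ pt < δc := by
      obtain ⟨hξ1, hξ2⟩ := Set.mem_prod.mp hξ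
      have h1 : dist ξ.1 xst ≤ r₁ := Metric.mem_closedBall.mp hξ1
      have h2 : dist ξ.2 yh ≤ r₂ := Metric.mem_closedBall.mp hξ2
      have h3 : dist ξ.2 yst ≤ r₂ + r₂ ^ 2 := by
        calc dist ξ.2 yst ≤ dist ξ.2 yh + dist yh yst := dist_triangle _ _ _
          _ ≤ r₂ + r₂ ^ 2 := by
              rw [dist_eq_norm]
              exact add_le_add h2 hyh
      have : dist ξ pt ≤ 2 * r₂ := by
        rw [Prod.dist_eq]
        apply max_le
        · exact le_trans h1 (by nlinarith)
        · exact le_trans h3 (by nlinarith)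
      calc dist ξ pt ≤ 2 * r₂ := this
        _ ≤ 2 * ε := by linarith
        _ < δc := by linarith
    have := hδc hξdist
    have hentry : dist (g ξ (i, j)) (g pt (i, j)) ≤ dist (g ξ) (g pt) :=
      dist_le_pi_dist (g ξ) (g pt) (i, j)
    have hentry2 : |pdY F ξ i j - pdY F pt i j| < δ' := by
      rw [Real.dist_eq] at hentry
      calc |pdY F ξ i j - pdY F pt i j| = dist (g ξ (i,j)) (g pt (i,j)) := by
            simp [hg, Real.dist_eq]
        _ ≤ dist (g ξ) (g pt) := dist_le_pi_dist _ _ _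
        _ < δ' := this
    have hMij : M i j = pdY F ξ i j := hξeq j
    have hDij : Dst i j = pdY F pt i j := hDstEntry i j
    rw [Matrix.sub_apply, hMij, hDij]
    rw [abs_sub_comm]
    exact hentry2.le
  -- norm of y - yh
  have hyyh : ‖y - yh‖ ≤ r₂ := by
    rw [← dist_eq_norm]; exact Metric.mem_closedBall.mp hy
  -- rewrite 1 - A*M
  have hrw : (1 : Matrix (Fin m) (Fin m) ℝ) - A * M = A * (Dst - M) := by
    rw [Matrix.mul_sub, hADst]
  -- main estimate
  have h1 : ‖A.mulVec (F (x, yh))‖ ≤ (m : ℝ) * CA * ((K : ℝ) * r₂ ^ 2) := by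
    calc ‖A.mulVec (F (x, yh))‖ ≤ (m : ℝ) * CA * ‖F (x, yh)‖ :=
          mulVec_norm_le_aux A _ CA hCA0 hCA
      _ ≤ (m : ℝ) * CA * ((K : ℝ) * r₂ ^ 2) :=
          mul_le_mul_of_nonneg_left hFbound hmCA
  have h2 : ‖((1 : Matrix (Fin m) (Fin m) ℝ) - A * M).mulVec (y - yh)‖ ≤
      (m : ℝ) * CA * ((m : ℝ) * δ' * r₂) := by
    rw [hrw, ← Matrix.mulVec_mulVec]
    calc ‖A.mulVec ((Dst - M).mulVec (y - yh))‖
        ≤ (m : ℝ) * CA * ‖(Dst - M).mulVec (y - yh)‖ :=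
          mulVec_norm_le_aux A _ CA hCA0 hCA
      _ ≤ (m : ℝ) * CA * ((m : ℝ) * δ' * r₂) := by
          apply mul_le_mul_of_nonneg_left _ hmCA
          calc ‖(Dst - M).mulVec (y - yh)‖ ≤ (m : ℝ) * δ' * ‖y - yh‖ :=
                mulVec_norm_le_aux _ _ δ' hδ'pos.le hMbound
            _ ≤ (m : ℝ) * δ' * r₂ :=
                mul_le_mul_of_nonneg_left hyyh
                  (mul_nonneg (Nat.cast_nonneg m) hδ'pos.le)
  calc ‖-(A.mulVec (F (x, yh))) + (1 - A * M).mulVec (y - yh)‖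
      ≤ ‖-(A.mulVec (F (x, yh)))‖ + ‖(1 - A * M).mulVec (y - yh)‖ := norm_add_le _ _
    _ = ‖A.mulVec (F (x, yh))‖ + ‖(1 - A * M).mulVec (y - yh)‖ := by rw [norm_neg]
    _ ≤ (m : ℝ) * CA * ((K : ℝ) * r₂ ^ 2) + (m : ℝ) * CA * ((m : ℝ) * δ' * r₂) :=
        add_le_add h1 h2
    _ ≤ (ρ / 2) * r₂ + (ρ / 2) * r₂ := by
        apply add_le_add
        · have key : (m : ℝ) * CA * (K : ℝ) * r₂ ≤ ρ / 2 := by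
            have hε' : ε * (2 * ((m : ℝ) * CA * (K : ℝ) + 1)) ≤ ρ := by
              rw [← le_div_iff₀ hden2] ; exact hεK
            have p2 : (m : ℝ) * CA * (K : ℝ) * r₂ ≤ (m : ℝ) * CA * (K : ℝ) * ε :=
              mul_le_mul_of_nonneg_left hr₂ε hmCAK
            linarith [hεpos]
          calc (m : ℝ) * CA * ((K : ℝ) * r₂ ^ 2)
              = ((m : ℝ) * CA * (K : ℝ) * r₂) * r₂ := by ring
            _ ≤ (ρ / 2) * r₂ := mul_le_mul_of_nonneg_right key hr₂pos.le
        · have key : (m : ℝ)^2 * CA * δ' ≤ ρ / 2 := by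
            have heq : (m : ℝ)^2 * CA * δ' =
                ((m : ℝ)^2 * CA * ρ) / (2 * ((m : ℝ)^2 * CA + 1)) := by
              rw [hδ'def]; ring
            rw [heq, div_le_div_iff₀ hden1 (by norm_num)]
            linarith [hρ0.le]
          calc (m : ℝ) * CA * ((m : ℝ) * δ' * r₂)
              = ((m : ℝ)^2 * CA * δ') * r₂ := by ring
            _ ≤ (ρ / 2) * r₂ := mul_le_mul_of_nonneg_right key hr₂pos.le
    _ = ρ * r₂ := by ring
end
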